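/- Let Π be the cyclic shift on (ℂ^d)^{⊗2t} and R the reflection (R sends |j₁⟩⊗…⊗|j_{2t}⟩ to |j_{2t}⟩⊗…⊗|j₁⟩), with d ≥ 2 and t ≥ 1. Then the 2t operators {R^n Π^{2τ} : n ∈ {0,1}, τ ∈ {0,…,t−1}} are linearly independent in End((ℂ^d)^{⊗2t}). -/

import Mathlib

/-!
Every operator involved is a matrix `P_σ` permuting tensor positions, with `P_σ P_τ = P_{τ ∘ σ}`,
so `R^n Π^{2τ} = P_σ` for the dihedral permutation `σ = rot^{2τ} ∘ rev^n` of `Fin (2t)`.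
The entry of `P_σ` at `(c ∘ σ, c)` is `1`, hence if for one basis vector `c` the vectors `c ∘ σ`
are pairwise distinct, these entries exhibit an identity matrix and the `P_σ` are independent.
For `c` the indicator of position `0` (which needs `d ≥ 2`), `c ∘ σ` records `σ⁻¹ 0`, which is
`-2τ` for `n = 0` and `2τ - 1` for `n = 1` in `ℤ/2t`; these are distinct because `2t` is even.
-/

/-- The cyclic shift operator `Π` on `(ℂ^d)^{⊗n}`. -/
def cyclicShift (d n : ℕ) : Matrix (Fin n → Fin d) (Fin n → Fin d) ℂ :=
  Matrix.of fun r c => if r = c ∘ finRotate n then 1 else 0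

/-- The reflectionOp operator `R` on `(ℂ^d)^{⊗n}`, reversing the order of the tensor factors:
`R |j₁⟩⊗…⊗|j_n⟩ = |j_n⟩⊗…⊗|j₁⟩`. -/
def reflectionOp (d n : ℕ) : Matrix (Fin n → Fin d) (Fin n → Fin d) ℂ :=
  Matrix.of fun r c => if r = c ∘ Fin.rev then 1 else 0

section PrecompMatrix

variable {ι : Type*} [Fintype ι] (R : Type*) [Semiring R] (κ : Type*) [DecidableEq κ]

def precompMatrix (σ : ι → ι) : Matrix (ι → κ) (ι → κ) R :=
  Matrix.of fun r c => if r = c ∘ σ then 1 else 0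

variable {R κ}

theorem linearIndependent_precompMatrix {η : Type*} (σ : η → ι → ι) (c : ι → κ)
    (hc : Function.Injective fun i => c ∘ σ i) :
    LinearIndependent R fun i => precompMatrix R κ (σ i) := by
  classical
  let entries : Matrix (ι → κ) (ι → κ) R →ₗ[R] η → R :=
    LinearMap.pi fun i => Matrix.entryLinearMap R R (c ∘ σ i) c
  have h_entries : entries ∘ (fun i => precompMatrix R κ (σ i)) = fun j => Pi.single j 1 := by
    ext j i
    simp [entries, precompMatrix, Pi.single_apply, hc.eq_iff, eq_comm]
  exact .of_comp entries (h_entries ▸ Pi.linearIndependent_single_one η R)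

theorem precompMatrix_id : precompMatrix R κ (id : ι → ι) = 1 := by
  ext r c
  simp [precompMatrix, Matrix.one_apply]

variable [DecidableEq ι] [Fintype κ]

theorem precompMatrix_mul (σ τ : ι → ι) :
    precompMatrix R κ σ * precompMatrix R κ τ = precompMatrix R κ (τ ∘ σ) := by
  ext r c
  simp [precompMatrix, Matrix.mul_apply, Function.comp_assoc]

theorem precompMatrix_pow (σ : ι → ι) (k : ℕ) :
    precompMatrix R κ σ ^ k = precompMatrix R κ σ^[k] := by
  induction k with
  | zero => exact precompMatrix_id.symm
  | succ k ih => rw [pow_succ, ih, precompMatrix_mul, Function.iterate_succ']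

end PrecompMatrix

theorem exists_comp_perm_injective_of_symm_apply_injective {ι κ η : Type*} [DecidableEq ι] [Nontrivial κ]
    (σ : η → Equiv.Perm ι) (a : ι) (h : Function.Injective fun i => (σ i).symm a) :
    ∃ c : ι → κ, Function.Injective fun i => c ∘ σ i := by
  obtain ⟨x, y, hxy⟩ := exists_pair_ne κ
  refine ⟨fun j => if j = a then x else y, fun i i' hii' => h ?_⟩
  have := congrFun hii' ((σ i).symm a)
  simp only [Function.comp_apply, Equiv.apply_symm_apply, if_true] at this
  split_ifs at this with ha
  · exact ((σ i').symm_apply_eq.2 ha.symm).symm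
  · exact absurd this hxy

open Fin.NatCast in
theorem finRotate_iterate_apply {n : ℕ} [NeZero n] (k : ℕ) (j : Fin n) :
    (finRotate n)^[k] j = j + (k : Fin n) := by
  induction k with
  | zero => simp
  | succ k ih => rw [Function.iterate_succ_apply', ih, finRotate_apply, Nat.cast_succ, add_assoc]

def dihedralPerm (t : ℕ) (p : Fin 2 × Fin t) : Equiv.Perm (Fin (2 * t)) :=
  finRotate (2 * t) ^ (2 * (p.2 : ℕ)) * Fin.revPerm ^ (p.1 : ℕ)

open Fin.NatCast in
theorem dihedralPerm_apply {t : ℕ} [NeZero t] (p : Fin 2 × Fin t) (j : Fin (2 * t)) :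
    dihedralPerm t p j = Fin.rev^[p.1] j + ((2 * p.2 : ℕ) : Fin (2 * t)) := by
  simp only [dihedralPerm, Equiv.Perm.coe_mul, Equiv.Perm.coe_pow, Function.comp_apply,
    finRotate_iterate_apply]
  rfl

theorem eq_of_dihedralPerm_apply_eq_zero {t : ℕ} [NeZero t] {p q : Fin 2 × Fin t}
    {j : Fin (2 * t)} (hp : dihedralPerm t p j = 0) (hq : dihedralPerm t q j = 0) : p = q := by
  obtain ⟨⟨a, ha⟩, τ, hτ⟩ := p
  obtain ⟨⟨b, hb⟩, τ', hτ'⟩ := q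
  have h2τ : 2 * τ < 2 * t := by omega
  have h2τ' : 2 * τ' < 2 * t := by omega
  simp only [Prod.mk.injEq, Fin.mk.injEq]
  interval_cases a <;> interval_cases b <;>
    simp only [dihedralPerm_apply, Function.iterate_zero, id_eq, Function.iterate_one, Fin.ext_iff,
      Fin.val_add_eq_ite, Fin.val_rev, Fin.val_natCast, Fin.val_zero, Nat.mod_eq_of_lt h2τ,
      Nat.mod_eq_of_lt h2τ'] at hp hq <;>
    split_ifs at hp hq <;> omega

theorem dihedralPerm_symm_zero_injective (t : ℕ) [NeZero t] :
    Function.Injective fun p => (dihedralPerm t p).symm 0 := fun _ _ hpq =>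
  eq_of_dihedralPerm_apply_eq_zero (Equiv.apply_symm_apply _ _)
    ((congrArg _ hpq).trans (Equiv.apply_symm_apply _ _))

theorem reflectionOp_pow_mul_cyclicShift_pow (d n a b : ℕ) :
    reflectionOp d n ^ a * cyclicShift d n ^ b =
      precompMatrix ℂ (Fin d) ⇑(finRotate n ^ b * Fin.revPerm ^ a : Equiv.Perm (Fin n)) := by
  rw [show reflectionOp d n = precompMatrix ℂ (Fin d) Fin.rev from rfl,
    show cyclicShift d n = precompMatrix ℂ (Fin d) ⇑(finRotate n) from rfl,
    precompMatrix_pow, precompMatrix_pow, precompMatrix_mul, Equiv.Perm.coe_mul,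
    Equiv.Perm.coe_pow, Equiv.Perm.coe_pow]
  rfl

/-- For `d ≥ 2`, `t ≥ 1`, the `2t` operators `R^n Π^{2τ}`
(`n ∈ {0,1}`, `τ ∈ {0,…,t−1}`) on `(ℂ^d)^{⊗2t}` are linearly independent. -/
theorem stmt10 (d t : ℕ) (hd : 2 ≤ d) (ht : 1 ≤ t) :
    LinearIndependent ℂ (fun p : Fin 2 × Fin t =>
      (reflectionOp d (2 * t)) ^ (p.1 : ℕ) * (cyclicShift d (2 * t)) ^ (2 * (p.2 : ℕ))) := by
  have : NeZero t := ⟨by omega⟩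
  have : Nontrivial (Fin d) := Fin.nontrivial_iff_two_le.2 hd
  obtain ⟨c, hc⟩ := exists_comp_perm_injective_of_symm_apply_injective (κ := Fin d) (dihedralPerm t) 0
    (dihedralPerm_symm_zero_injective t)
  simp only [reflectionOp_pow_mul_cyclicShift_pow]
  exact linearIndependent_precompMatrix (R := ℂ) (fun p => ⇑(dihedralPerm t p)) c hc
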